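/- Let 0 < ε₁ < ε₂ < ... < ε_m be m distinct privacy budgets with positive integer multiplicities n₁, ..., n_m summing to n, and let I > 0 be the query sensitivity. For a threshold θ ∈ {ε₁, ..., ε_m}, define the sampling probability p_j(θ) = (e^{ε_j} − 1)/(e^{θ} − 1), the sampling error err_s(θ) = Σ_{j : ε_j < θ} n_j · p_j(θ)(1 − p_j(θ)) + (Σ_{j : ε_j < θ} n_j (1 − p_j(θ)))², and the noise error err_dp(θ) = 2I²/θ². Then the minimum over k ∈ {1,...,m} of err_s(ε_k) + err_dp(ε_k) is at most min( 2I²/ε₁² , (n − n_m)(n − n_m + 1/4) + 2I²/ε_m² ). -/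
import Mathlib


/-- OBS error upper bound. Given `m` distinct increasing positive
privacy budgets `ε₁ < ... < ε_m` with positive multiplicities summing to `n`,
sensitivity `I > 0`, sampling error `err_s` and noise error `err_dp`, the
minimum over candidate thresholds `ε k` of the total error is at most
`min(2I²/ε₁², (n − n_m)(n − n_m + 1/4) + 2I²/ε_m²)`. -/
theorem obs_error_upper_bound
    (m : ℕ) (hm : 0 < m)
    (ε : Fin m → ℝ) (hεpos : ∀ j, 0 < ε j) (hmono : StrictMono ε)
    (nj : Fin m → ℕ) (hnj : ∀ j, 0 < nj j)
    (n : ℕ) (hn : n = ∑ j, nj j)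
    (I : ℝ) (hI : 0 < I)
    (p : ℝ → Fin m → ℝ)
    (hp : ∀ θ j, p θ j = (Real.exp (ε j) - 1) / (Real.exp θ - 1))
    (errs : ℝ → ℝ)
    (herrs : ∀ θ, errs θ =
      (∑ j ∈ Finset.univ.filter (fun j => ε j < θ),
          (nj j : ℝ) * (p θ j * (1 - p θ j)))
        + (∑ j ∈ Finset.univ.filter (fun j => ε j < θ),
            (nj j : ℝ) * (1 - p θ j)) ^ 2)
    (errdp : ℝ → ℝ)
    (herrdp : ∀ θ, errdp θ = 2 * I ^ 2 / θ ^ 2) :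
    (Finset.univ.inf' (Finset.univ_nonempty_iff.mpr ⟨⟨0, hm⟩⟩)
        (fun k : Fin m => errs (ε k) + errdp (ε k)))
      ≤ min (2 * I ^ 2 / (ε ⟨0, hm⟩) ^ 2)
          (((n : ℝ) - (nj ⟨m - 1, Nat.sub_lt hm one_pos⟩ : ℕ))
              * (((n : ℝ) - (nj ⟨m - 1, Nat.sub_lt hm one_pos⟩ : ℕ)) + 1 / 4)
            + 2 * I ^ 2 / (ε ⟨m - 1, Nat.sub_lt hm one_pos⟩) ^ 2) := by
  set k0 : Fin m := ⟨0, hm⟩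
  set km : Fin m := ⟨m - 1, Nat.sub_lt hm one_pos⟩
  apply le_min
  · -- bound at k0: filter is empty
    refine le_trans (Finset.inf'_le _ (Finset.mem_univ k0)) ?_
    have hempty : (Finset.univ.filter (fun j => ε j < ε k0)) = ∅ := by
      apply Finset.filter_false_of_mem
      intro j _
      have : k0 ≤ j := by exact Fin.mk_le_of_le_val (Nat.zero_le _)
      exact not_lt.mpr (hmono.monotone this)
    rw [herrs, herrdp, hempty]
    simp
  · refine le_trans (Finset.inf'_le _ (Finset.mem_univ km)) ?_
    rw [herrs, herrdp]
    have hfilt : (Finset.univ.filter (fun j => ε j < ε km)) = Finset.univ.erase km := by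
      ext j
      simp only [Finset.mem_filter, Finset.mem_univ, true_and, Finset.mem_erase, and_true]
      constructor
      · intro h hj; rw [hj] at h; exact lt_irrefl _ h
      · intro h
        apply hmono
        have hle : j ≤ km := by
          rw [Fin.le_def]; have := j.isLt; simp only [km]; omega
        exact lt_of_le_of_ne hle h
    have hsum : ∑ j ∈ Finset.univ.erase km, (nj j : ℝ) = (n : ℝ) - (nj km : ℝ) := by
      have := Finset.add_sum_erase Finset.univ (fun j => (nj j : ℝ)) (Finset.mem_univ km)
      have hn' : (n : ℝ) = ∑ j, (nj j : ℝ) := by rw [hn]; push_cast; ring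
      rw [hn', ← this]; ring
    have hpbound : ∀ j ∈ Finset.univ.erase km, 0 < p (ε km) j ∧ p (ε km) j < 1 := by
      intro j hj
      have hjlt : ε j < ε km := by
        have := (Finset.mem_filter.mp (hfilt ▸ hj)).2
        exact this
      have h1 : (0:ℝ) < Real.exp (ε j) - 1 := by
        have h := Real.exp_lt_exp.mpr (hεpos j)
        rw [Real.exp_zero] at h
        linarith
      have h2 : Real.exp (ε j) - 1 < Real.exp (ε km) - 1 := by
        have := Real.exp_lt_exp.mpr hjlt; linarith
      rw [hp]
      constructor
      · exact div_pos h1 (by linarith)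
      · exact (div_lt_one (by linarith)).mpr h2
    -- bound each term
    have hA : ∑ j ∈ Finset.univ.erase km, (nj j : ℝ) * (p (ε km) j * (1 - p (ε km) j))
        ≤ ((n : ℝ) - (nj km : ℝ)) * (1/4) := by
      rw [← hsum, Finset.sum_mul]
      apply Finset.sum_le_sum
      intro j hj
      obtain ⟨h0, h1⟩ := hpbound j hj
      have : p (ε km) j * (1 - p (ε km) j) ≤ 1/4 := by
        nlinarith [sq_nonneg (p (ε km) j - 1/2)]
      have hnjnn : (0:ℝ) ≤ (nj j : ℝ) := Nat.cast_nonneg _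
      nlinarith
    have hB : ∑ j ∈ Finset.univ.erase km, (nj j : ℝ) * (1 - p (ε km) j)
        ≤ (n : ℝ) - (nj km : ℝ) := by
      rw [← hsum]
      apply Finset.sum_le_sum
      intro j hj
      obtain ⟨h0, h1⟩ := hpbound j hj
      have hnjnn : (0:ℝ) ≤ (nj j : ℝ) := Nat.cast_nonneg _
      nlinarith
    have hBnn : 0 ≤ ∑ j ∈ Finset.univ.erase km, (nj j : ℝ) * (1 - p (ε km) j) := by
      apply Finset.sum_nonneg
      intro j hj
      obtain ⟨h0, h1⟩ := hpbound j hj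
      have hnjnn : (0:ℝ) ≤ (nj j : ℝ) := Nat.cast_nonneg _
      nlinarith
    have hB2 : (∑ j ∈ Finset.univ.erase km, (nj j : ℝ) * (1 - p (ε km) j))^2
        ≤ ((n : ℝ) - (nj km : ℝ))^2 := by nlinarith
    rw [hfilt]
    nlinarith
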